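/- arXiv:2009.09558 — 5 statements merged into one kernel-verified Lean document; each statement's English description precedes it below -/
import Mathlib

section
/- For any binary sequence x of even length ℓ, and constants 0 ≤ p₁ < 1/2 < p₂ ≤ 1 with k = (p₂ - p₁)ℓ an integer, there exists an index t in the set S = {0, ℓ} ∪ {ik : i ≥ 1, ik < ℓ} such that the sequence obtained by flipping the first t bits of x has weight in the interval [p₁ℓ, p₂ℓ]. -/
/-- Hamming weight of a binary sequence. -/
def wt (l : List Bool) : ℕ := l.count true

/-- Flip the first `t` bits of a binary sequence. -/
def flipFirst (t : ℕ) (l : List Bool) : List Bool :=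
  (l.take t).map (fun b => !b) ++ l.drop t

/-!
Flipping one more bit changes the weight by at most one, so along the walk `S` the weight
moves in steps of at most `k = p₂ ℓ - p₁ ℓ`, the length of the target interval; such a walk
cannot jump over the interval. Flipping everything turns weight `w` into `ℓ - w`, so the walk
starts and ends on opposite sides of `ℓ / 2`, which lies in `[p₁ ℓ, p₂ ℓ]`.
-/

lemma count_true_map_not (l : List Bool) : (l.map (fun b => !b)).count true = l.count false := by
  induction l with
  | nil => rfl
  | cons b l ih => cases b <;> simp [ih]

lemma wt_flipFirst_add (t : ℕ) (x : List Bool) :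
    wt (flipFirst t x) + 2 * (x.take t).count true = min t x.length + wt x := by
  have hflip := List.count_true_add_count_false (x.take t)
  have hsplit : (x.take t).count true + (x.drop t).count true = wt x := by
    rw [wt, ← List.count_append, List.take_append_drop]
  rw [List.length_take] at hflip
  simp only [wt, flipFirst, List.count_append, count_true_map_not] at hsplit ⊢
  omega

@[simp]
lemma wt_flipFirst_zero (x : List Bool) : wt (flipFirst 0 x) = wt x := by
  simp [flipFirst]

lemma wt_flipFirst_length_add (x : List Bool) : wt (flipFirst x.length x) + wt x = x.length := by
  have h := wt_flipFirst_add x.length x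
  rw [List.take_length, min_self] at h
  simp only [wt] at h ⊢
  omega

lemma abs_wt_flipFirst_sub_le {t u : ℕ} (htu : t ≤ u) (x : List Bool) :
    |(wt (flipFirst u x) : ℝ) - wt (flipFirst t x)| ≤ (u - t : ℕ) := by
  have hu := wt_flipFirst_add u x
  have ht := wt_flipFirst_add t x
  have hsplit : (x.take u).count true
      = (x.take t).count true + ((x.drop t).take (u - t)).count true := by
    rw [← List.count_append, ← List.take_add, Nat.add_sub_cancel' htu]
  have hmid : ((x.drop t).take (u - t)).count true ≤ min (u - t) (x.length - t) := by
    simpa using (List.count_le_length (a := true) (l := (x.drop t).take (u - t)))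
  have hℤ : |(wt (flipFirst u x) : ℤ) - wt (flipFirst t x)| ≤ (u - t : ℕ) := by
    rw [abs_le]
    omega
  exact_mod_cast hℤ

lemma exists_mem_Icc_of_sub_le {f : ℕ → ℝ} {a b : ℝ} {M : ℕ}
    (hstep : ∀ i < M, f (i + 1) - f i ≤ b - a) (h0 : f 0 ≤ b) (hM : a ≤ f M) :
    ∃ i ≤ M, f i ∈ Set.Icc a b := by
  induction M with
  | zero => exact ⟨0, le_rfl, hM, h0⟩
  | succ M ih =>
    by_cases hprev : a ≤ f M
    · obtain ⟨i, hi, hfi⟩ := ih (fun i hi => hstep i (by omega)) hprev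
      exact ⟨i, by omega, hfi⟩
    · have := hstep M M.lt_succ_self
      exact ⟨M + 1, le_rfl, hM, by linarith [not_le.mp hprev]⟩

lemma exists_mem_Icc_of_abs_sub_le {f : ℕ → ℝ} {a b c : ℝ} {M : ℕ}
    (hstep : ∀ i < M, |f (i + 1) - f i| ≤ b - a)
    (hc : c ∈ Set.Icc a b) (hcf : c ∈ Set.uIcc (f 0) (f M)) :
    ∃ i ≤ M, f i ∈ Set.Icc a b := by
  rcases Set.mem_uIcc.mp hcf with ⟨h0, hM⟩ | ⟨hM, h0⟩
  · exact exists_mem_Icc_of_sub_le (fun i hi => (abs_le.mp (hstep i hi)).2)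
      (h0.trans hc.2) (hc.1.trans hM)
  · obtain ⟨i, hi, hfi⟩ := exists_mem_Icc_of_sub_le (f := fun i => -f i) (a := -b) (b := -a)
      (fun i hi => by linarith [(abs_le.mp (hstep i hi)).1]) (by linarith [hc.1])
      (by linarith [hc.2])
    exact ⟨i, hi, by linarith [hfi.2], by linarith [hfi.1]⟩

lemma min_mul_mem_walk (i k ℓ : ℕ) :
    min (i * k) ℓ = 0 ∨ min (i * k) ℓ = ℓ ∨ ∃ j : ℕ, 1 ≤ j ∧ min (i * k) ℓ = j * k ∧ j * k < ℓ := by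
  rcases Nat.lt_or_ge (i * k) ℓ with h | h
  · rcases Nat.eq_zero_or_pos i with rfl | hi
    · simp
    · exact Or.inr (Or.inr ⟨i, hi, min_eq_left h.le, h⟩)
  · exact Or.inr (Or.inl (min_eq_right h))

theorem stmt0_general (ℓ k : ℕ) (p₁ p₂ : ℝ)
    (h₁ : p₁ < 1/2) (h₂ : (1:ℝ)/2 < p₂)
    (hk : (k : ℝ) = (p₂ - p₁) * ℓ)
    (x : List Bool) (hx : x.length = ℓ) :
    ∃ t : ℕ, (t = 0 ∨ t = ℓ ∨ ∃ i : ℕ, 1 ≤ i ∧ t = i * k ∧ i * k < ℓ) ∧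
      p₁ * ℓ ≤ (wt (flipFirst t x) : ℝ) ∧ (wt (flipFirst t x) : ℝ) ≤ p₂ * ℓ := by
  have hℓ : ℓ ≤ ℓ * k := by
    rcases k with _ | k
    · have : (ℓ : ℝ) = 0 := by
        simpa [(by linarith : p₂ - p₁ ≠ 0)] using hk.symm
      simp only [Nat.cast_eq_zero] at this
      simp [this]
    · exact Nat.le_mul_of_pos_right ℓ k.succ_pos
  set f : ℕ → ℝ := fun i => wt (flipFirst (min (i * k) ℓ) x)
  have hstep : ∀ i < ℓ, |f (i + 1) - f i| ≤ p₂ * ℓ - p₁ * ℓ := by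
    intro i _
    refine (abs_wt_flipFirst_sub_le (by gcongr; omega) x).trans ?_
    rw [← sub_mul, ← hk, Nat.cast_le, add_mul, one_mul]
    omega
  have hhalf : (ℓ / 2 : ℝ) ∈ Set.Icc (p₁ * ℓ) (p₂ * ℓ) := by
    constructor <;> nlinarith [(Nat.cast_nonneg ℓ : (0 : ℝ) ≤ ℓ)]
  have hends : (f 0 : ℝ) + f ℓ = ℓ := by
    have h := wt_flipFirst_length_add x
    simp only [f, zero_mul, Nat.zero_le, min_eq_left, min_eq_right hℓ, wt_flipFirst_zero]
    rw [hx] at h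
    exact_mod_cast (add_comm _ _).trans h
  have hmid : (ℓ / 2 : ℝ) ∈ Set.uIcc (f 0) (f ℓ) := by
    rw [Set.mem_uIcc]
    rcases le_total (f 0) (ℓ / 2) with h | h
    · left; constructor <;> linarith
    · right; constructor <;> linarith
  obtain ⟨i, -, hfi⟩ := exists_mem_Icc_of_abs_sub_le hstep hhalf hmid
  exact ⟨min (i * k) ℓ, min_mul_mem_walk i k ℓ, hfi⟩

theorem stmt0 (ℓ k : ℕ) (hℓ : Even ℓ) (p₁ p₂ : ℝ)
    (hp₁ : 0 ≤ p₁) (h₁ : p₁ < 1/2) (h₂ : (1:ℝ)/2 < p₂) (hp₂ : p₂ ≤ 1)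
    (hk : (k : ℝ) = (p₂ - p₁) * ℓ)
    (x : List Bool) (hx : x.length = ℓ) :
    ∃ t : ℕ, (t = 0 ∨ t = ℓ ∨ ∃ i : ℕ, 1 ≤ i ∧ t = i * k ∧ i * k < ℓ) ∧
      p₁ * ℓ ≤ (wt (flipFirst t x) : ℝ) ∧ (wt (flipFirst t x) : ℝ) ≤ p₂ * ℓ :=
  stmt0_general ℓ k p₁ p₂ h₁ h₂ hk x hx
end

section
/- Let 0 ≤ p₁ < 1/2 < p₂ ≤ 1, c = min{1/2 − p₁, p₂ − 1/2}, and let a ≤ p₁ℓ and b ≥ p₂ℓ. If n ≥ 4 and (1/c²)·logₑ(n) ≤ ℓ ≤ n, then the number of binary sequences of length n in which every window of ℓ consecutive bits has weight in [a,b] is at least 2^{n−1}. -/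
open Finset
lemma count_ofFn_true : ∀ {m : ℕ} (g : Fin m → Bool),
    (List.ofFn g).count true = (univ.filter (fun j => g j = true)).card := by
  intro m
  induction m with
  | zero => intro g; simp
  | succ k ih =>
    intro g
    rw [List.ofFn_succ, List.count_cons, ih, Finset.card_filter, Finset.card_filter,
      Fin.sum_univ_succ]
    by_cases h : g 0 = true <;> simp [h, add_comm]

lemma window_eq_ofFn {n : ℕ} (f : Fin n → Bool) (i m : ℕ) (h : i + m ≤ n) :
    ((List.ofFn f).drop i).take m = List.ofFn (fun j : Fin m => f ⟨i + j, by omega⟩) := by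
  apply List.ext_getElem
  · simp; omega
  · intro j h1 h2
    simp only [List.getElem_take, List.getElem_drop, List.getElem_ofFn]

lemma window_wt {n : ℕ} (f : Fin n → Bool) (i m : ℕ) (h : i + m ≤ n) :
    wt (((List.ofFn f).drop i).take m)
      = ((univ.filter (fun j : Fin n => i ≤ (j : ℕ) ∧ (j : ℕ) < i + m)).filter
          (fun j => f j = true)).card := by
  rw [wt, window_eq_ofFn f i m h, count_ofFn_true, Finset.filter_filter]
  refine Finset.card_bij (fun (j : Fin m) _ => (⟨i + (j : ℕ), by omega⟩ : Fin n)) ?_ ?_ ?_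
  · intro j hj
    simp only [mem_filter, mem_univ, true_and] at hj ⊢
    refine ⟨⟨by omega, by omega⟩, hj⟩
  · intro j1 h1 j2 h2 he
    have := congrArg (fun (x : Fin n) => (x : ℕ)) he
    simp only at this
    exact Fin.ext (by omega)
  · intro b hb
    simp only [mem_filter, mem_univ, true_and] at hb
    refine ⟨⟨(b : ℕ) - i, by omega⟩, ?_, ?_⟩
    · simp only [mem_filter, mem_univ, true_and]
      have : (⟨i + ((b : ℕ) - i), by omega⟩ : Fin n) = b := Fin.ext (by simp; omega)
      rw [this]; exact hb.2
    · exact Fin.ext (by simp; omega)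

lemma card_window {n : ℕ} (i m : ℕ) (h : i + m ≤ n) :
    (univ.filter (fun j : Fin n => i ≤ (j : ℕ) ∧ (j : ℕ) < i + m)).card = m := by
  have h1 := window_wt (fun _ : Fin n => true) i m h
  have h2 : wt (((List.ofFn (fun _ : Fin n => true)).drop i).take m) = m := by
    rw [window_eq_ofFn _ i m h]; simp [wt]
  rw [h2] at h1
  simpa using h1.symm

lemma ofFn_get_cast {n : ℕ} (l : List Bool) (h : l.length = n) :
    List.ofFn (fun j : Fin n => l.get (Fin.cast h.symm j)) = l := by
  subst h; simp
lemma sum_pow_card {α : Type*} [DecidableEq α] (T : Finset α) (x : ℝ) :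
    ∑ s ∈ T.powerset, x ^ s.card = (x + 1) ^ T.card := by
  have := Finset.prod_add (fun _ : α => x) (fun _ : α => (1:ℝ)) T
  simp only [prod_const, one_pow, mul_one, prod_const_one] at this
  rw [← this]

lemma tail_bound {α : Type*} [DecidableEq α] (T : Finset α) (c : ℝ) (hc : 0 < c)
    (p : ℕ → Prop) [DecidablePred p]
    (hp : ∀ k : ℕ, p k → (k : ℝ) ≤ (1/2 - c) * T.card) :
    ((T.powerset.filter (fun s => p s.card)).card : ℝ)
      ≤ 2 ^ T.card * Real.exp (-(2 * c ^ 2 * T.card)) := by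
  set L : ℝ := 4 * c with hL
  set t : ℝ := (T.card : ℝ) with ht
  have hL0 : 0 < L := by positivity
  have step1 : ((T.powerset.filter (fun s => p s.card)).card : ℝ)
      ≤ ∑ s ∈ T.powerset, Real.exp (L * ((1/2 - c) * t - s.card)) := by
    rw [Finset.card_filter]
    push_cast
    rw [← Finset.sum_filter]
    apply le_trans (Finset.sum_le_sum (fun s hs => ?_))
      (Finset.sum_le_sum_of_subset_of_nonneg (Finset.filter_subset _ _)
        (fun s _ _ => (Real.exp_pos _).le))
    rw [Finset.mem_filter] at hs
    have := hp s.card hs.2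
    apply Real.one_le_exp
    nlinarith
  have step2 : ∑ s ∈ T.powerset, Real.exp (L * ((1/2 - c) * t - s.card))
      = Real.exp (L * (1/2 - c) * t) * (Real.exp (-L) + 1) ^ T.card := by
    rw [← sum_pow_card T (Real.exp (-L)), Finset.mul_sum]
    apply Finset.sum_congr rfl
    intro s _
    rw [← Real.exp_nat_mul, ← Real.exp_add]
    ring_nf
  have cosh_bd : Real.exp (-L) + 1 ≤ 2 * Real.exp (L^2/8 - L/2) := by
    have h1 : Real.cosh (L/2) ≤ Real.exp ((L/2)^2/2) := Real.cosh_le_exp_half_sq _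
    have hmul : Real.exp (-(L/2)) * Real.exp (L/2) = 1 := by
      rw [← Real.exp_add]; simp
    have h2 : Real.exp (-L) + 1 = 2 * Real.exp (-(L/2)) * Real.cosh (L/2) := by
      rw [Real.cosh_eq, show -L = -(L/2) + -(L/2) by ring, Real.exp_add]
      linear_combination -hmul
    rw [h2, show L^2/8 - L/2 = (L/2)^2/2 + (-(L/2)) by ring, Real.exp_add]
    have h3 := Real.exp_pos (-(L/2))
    nlinarith
  have step3 : (Real.exp (-L) + 1) ^ T.card ≤ (2 * Real.exp (L^2/8 - L/2)) ^ T.card := by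
    apply pow_le_pow_left₀ (by positivity) cosh_bd
  calc ((T.powerset.filter (fun s => p s.card)).card : ℝ)
      ≤ Real.exp (L * (1/2 - c) * t) * (Real.exp (-L) + 1) ^ T.card := by
        rw [← step2]; exact step1
    _ ≤ Real.exp (L * (1/2 - c) * t) * (2 * Real.exp (L^2/8 - L/2)) ^ T.card := by
        apply mul_le_mul_of_nonneg_left step3 (Real.exp_pos _).le
    _ = 2 ^ T.card * Real.exp (-(2 * c ^ 2 * t)) := by
        rw [mul_pow, ← Real.exp_nat_mul]
        rw [← mul_assoc, mul_comm (Real.exp _) ((2:ℝ)^T.card), mul_assoc, ← Real.exp_add]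
        congr 1
        rw [hL]
        push_cast [← ht]
        ring
lemma fiber_card {n : ℕ} (T : Finset (Fin n)) (s : Finset (Fin n)) :
    (univ.filter (fun f : Fin n → Bool =>
      T.filter (fun j => f j = true) = s)).card ≤ 2 ^ (n - T.card) := by
  classical
  have key := Finset.card_le_card_of_injOn
    (f := fun (f : Fin n → Bool) => (fun j : {j : Fin n // j ∉ T} => f j.1))
    (s := univ.filter (fun f : Fin n → Bool => T.filter (fun j => f j = true) = s))
    (t := (univ : Finset ({j : Fin n // j ∉ T} → Bool)))
    (fun _ _ => mem_univ _) ?_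
  · calc _ ≤ (univ : Finset ({j : Fin n // j ∉ T} → Bool)).card := key
      _ = 2 ^ (n - T.card) := by
          rw [card_univ, Fintype.card_fun, Fintype.card_bool, Fintype.card_subtype_compl,
            Fintype.card_coe, Fintype.card_fin]
  · intro f hf g hg hfg
    simp only [mem_coe, mem_filter, mem_univ, true_and] at hf hg
    funext j
    by_cases hj : j ∈ T
    · have h1 : (f j = true) ↔ j ∈ s := by
        rw [← hf]; simp [Finset.mem_filter, hj]
      have h2 : (g j = true) ↔ j ∈ s := by
        rw [← hg]; simp [Finset.mem_filter, hj]
      cases hfj : f j <;> cases hgj : g j <;> simp_all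
    · exact congrFun hfg ⟨j, hj⟩

lemma bad_card {n : ℕ} (T : Finset (Fin n)) (p : ℕ → Prop) [DecidablePred p] :
    (univ.filter (fun f : Fin n → Bool =>
        p ((T.filter (fun j => f j = true)).card))).card
      ≤ (T.powerset.filter (fun s => p s.card)).card * 2 ^ (n - T.card) := by
  classical
  have hsub : univ.filter (fun f : Fin n → Bool =>
        p ((T.filter (fun j => f j = true)).card))
      ⊆ (T.powerset.filter (fun s => p s.card)).biUnion
          (fun s => univ.filter (fun f : Fin n → Bool =>
            T.filter (fun j => f j = true) = s)) := by
    intro f hf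
    simp only [mem_filter, mem_univ, true_and] at hf
    rw [Finset.mem_biUnion]
    exact ⟨T.filter (fun j => f j = true),
      by simp [Finset.mem_filter, Finset.mem_powerset, Finset.filter_subset, hf],
      by simp⟩
  calc _ ≤ _ := Finset.card_le_card hsub
    _ ≤ ∑ s ∈ T.powerset.filter (fun s => p s.card),
          (univ.filter (fun f : Fin n → Bool =>
            T.filter (fun j => f j = true) = s)).card := Finset.card_biUnion_le
    _ ≤ ∑ _s ∈ T.powerset.filter (fun s => p s.card), 2 ^ (n - T.card) :=
        Finset.sum_le_sum (fun s _ => fiber_card T s)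
    _ = _ := by rw [Finset.sum_const, smul_eq_mul]

lemma compl_filter_card {n : ℕ} (T : Finset (Fin n)) (p : ℕ → Prop) [DecidablePred p] :
    (T.powerset.filter (fun s => p s.card)).card
      = (T.powerset.filter (fun s => p (T.card - s.card))).card := by
  classical
  apply Finset.card_nbij' (i := fun s => T \ s) (j := fun s => T \ s)
  · intro s hs
    simp only [mem_coe, mem_filter, Finset.mem_powerset] at hs ⊢
    refine ⟨Finset.sdiff_subset, ?_⟩
    rw [Finset.card_sdiff_of_subset hs.1, Nat.sub_sub_self (Finset.card_le_card hs.1)]; exact hs.2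
  · intro s hs
    simp only [mem_coe, mem_filter, Finset.mem_powerset] at hs ⊢
    exact ⟨Finset.sdiff_subset, by rw [Finset.card_sdiff_of_subset hs.1]; exact hs.2⟩
  · intro s hs
    simp only [mem_coe, mem_filter, Finset.mem_powerset] at hs
    exact Finset.sdiff_sdiff_eq_self hs.1
  · intro s hs
    simp only [mem_coe, mem_filter, Finset.mem_powerset] at hs
    exact Finset.sdiff_sdiff_eq_self hs.1

set_option maxHeartbeats 1000000 in
theorem stmt4 (n ℓ : ℕ) (p₁ p₂ a b c : ℝ)
    (hp₁ : 0 ≤ p₁) (h₁ : p₁ < 1/2) (h₂ : (1:ℝ)/2 < p₂) (hp₂ : p₂ ≤ 1)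
    (hc : c = min (1/2 - p₁) (p₂ - 1/2))
    (ha : a ≤ p₁ * ℓ) (hb : p₂ * ℓ ≤ b)
    (hn : 4 ≤ n) (hℓ1 : (1 / c^2) * Real.log n ≤ ℓ) (hℓ2 : ℓ ≤ n) :
    2^(n-1) ≤ Nat.card {x : List Bool // x.length = n ∧
      ∀ i, i + ℓ ≤ n → a ≤ (wt ((x.drop i).take ℓ) : ℝ) ∧ (wt ((x.drop i).take ℓ) : ℝ) ≤ b} := by
  classical
  have hc0 : 0 < c := by rw [hc]; apply lt_min <;> linarith
  have hcl : c ≤ 1/2 - p₁ := by rw [hc]; exact min_le_left _ _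
  have hch : c ≤ p₂ - 1/2 := by rw [hc]; exact min_le_right _ _
  have hn1 : (1:ℝ) < n := by exact_mod_cast (by omega : 1 < n)
  have hlogn : 0 < Real.log n := Real.log_pos hn1
  have hl0 : 1 ≤ ℓ := by
    by_contra hco
    have hℓ0 : ℓ = 0 := by omega
    have : (0:ℝ) < (c^2)⁻¹ * Real.log n :=
      mul_pos (inv_pos.mpr (by positivity)) hlogn
    rw [hℓ0] at hℓ1
    simp at hℓ1
    linarith
  have hcl2 : Real.log n ≤ c^2 * ℓ := by
    rw [div_mul_eq_mul_div, one_mul, div_le_iff₀ (by positivity : (0:ℝ) < c^2)] at hℓ1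
    linarith
  -- the window sets
  set T : ℕ → Finset (Fin n) :=
    fun i => univ.filter (fun j : Fin n => i ≤ (j : ℕ) ∧ (j : ℕ) < i + ℓ) with hT
  -- the predicate on functions
  set P : (Fin n → Bool) → Prop := fun f => ∀ i : ℕ, i + ℓ ≤ n →
    a ≤ (((T i).filter (fun j => f j = true)).card : ℝ) ∧
      (((T i).filter (fun j => f j = true)).card : ℝ) ≤ b with hP
  -- transfer Nat.card to a Finset count
  have e : {f : Fin n → Bool // P f} ≃ {x : List Bool // x.length = n ∧
      ∀ i, i + ℓ ≤ n → a ≤ (wt ((x.drop i).take ℓ) : ℝ) ∧ (wt ((x.drop i).take ℓ) : ℝ) ≤ b} :=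
    { toFun := fun f => ⟨List.ofFn f.1, by simp, fun i hi => by
        rw [window_wt f.1 i ℓ hi]; exact f.2 i hi⟩
      invFun := fun x => ⟨fun j => x.1.get (Fin.cast x.2.1.symm j), fun i hi => by
        have hw := window_wt (fun j : Fin n => x.1.get (Fin.cast x.2.1.symm j)) i ℓ hi
        rw [ofFn_get_cast x.1 x.2.1] at hw
        rw [← hw]
        exact x.2.2 i hi⟩
      left_inv := fun f => by
        apply Subtype.ext; funext j; simp [List.get_ofFn]
      right_inv := fun x => by
        apply Subtype.ext; exact ofFn_get_cast x.1 x.2.1 }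
  rw [← Nat.card_congr e, Nat.card_eq_fintype_card, Fintype.card_subtype]
  -- counting
  have hcards : (univ.filter P).card + (univ.filter (fun f => ¬ P f)).card = 2^n := by
    rw [Finset.card_filter_add_card_filter_not, card_univ]
    simp [Fintype.card_fun]
  set M := univ.filter (fun f : Fin n → Bool => ¬ P f) with hM
  -- bad sets
  set badP : ℕ → Prop := fun k => ¬(a ≤ (k:ℝ) ∧ (k:ℝ) ≤ b) with hbadP
  set Bad : ℕ → Finset (Fin n → Bool) :=
    fun i => univ.filter (fun f => badP (((T i).filter (fun j => f j = true)).card)) with hBad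
  have hMsub : M ⊆ (range (n - ℓ + 1)).biUnion Bad := by
    intro f hf
    rw [hM, mem_filter] at hf
    rw [hP] at hf
    obtain ⟨-, hf⟩ := hf
    rw [not_forall] at hf
    obtain ⟨i, hi⟩ := hf
    rw [Classical.not_imp] at hi
    rw [Finset.mem_biUnion]
    exact ⟨i, by rw [Finset.mem_range]; omega,
      by rw [hBad]; simp only [mem_filter, mem_univ, true_and]; exact hi.2⟩
  -- per-window bound
  have hbound : ∀ i ∈ range (n - ℓ + 1), ((Bad i).card : ℝ)
      ≤ 2 * (2^ℓ * Real.exp (-(2 * c^2 * ℓ))) * 2^(n - ℓ) := by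
    intro i hi
    rw [Finset.mem_range] at hi
    have hiℓ : i + ℓ ≤ n := by omega
    have hTc : (T i).card = ℓ := card_window i ℓ hiℓ
    have h1 : (Bad i).card ≤ ((T i).powerset.filter (fun s => badP s.card)).card * 2^(n - ℓ) := by
      rw [hBad]
      have := bad_card (T i) badP
      rwa [hTc] at this
    have hsplit : (T i).powerset.filter (fun s => badP s.card)
        ⊆ (T i).powerset.filter (fun s => ((s.card : ℝ) < a))
          ∪ (T i).powerset.filter (fun s => (b < (s.card : ℝ))) := by
      intro s hs
      rw [mem_filter] at hs
      rw [Finset.mem_union, mem_filter, mem_filter]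
      rcases not_and_or.mp hs.2 with h | h
      · exact Or.inl ⟨hs.1, not_le.mp h⟩
      · exact Or.inr ⟨hs.1, not_le.mp h⟩
    have hlow : (((T i).powerset.filter (fun s => ((s.card : ℝ) < a))).card : ℝ)
        ≤ 2^ℓ * Real.exp (-(2 * c^2 * ℓ)) := by
      have := tail_bound (T i) c hc0 (fun k => (k:ℝ) < a) ?_
      · rwa [hTc] at this
      · intro k hk
        rw [hTc]
        have hℓ0 : (0:ℝ) ≤ (ℓ:ℝ) := by positivity
        nlinarith
    have hhigh : (((T i).powerset.filter (fun s => (b < (s.card : ℝ)))).card : ℝ)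
        ≤ 2^ℓ * Real.exp (-(2 * c^2 * ℓ)) := by
      rw [compl_filter_card (T i) (fun k => b < (k:ℝ)), hTc]
      have := tail_bound (T i) c hc0 (fun k => b < ((ℓ - k : ℕ) : ℝ)) ?_
      · rwa [hTc] at this
      · intro k hk
        rw [hTc]
        have hb0 : (0:ℝ) < b := by nlinarith [hl0, (by exact_mod_cast hl0 : (1:ℝ) ≤ (ℓ:ℝ))]
        by_cases hkℓ : k ≤ ℓ
        · have : ((ℓ - k : ℕ) : ℝ) = (ℓ:ℝ) - k := by
            push_cast [Nat.cast_sub hkℓ]; ring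
          rw [this] at hk
          nlinarith
        · have : (ℓ - k : ℕ) = 0 := by omega
          rw [this] at hk
          norm_num at hk
          linarith
    calc ((Bad i).card : ℝ)
        ≤ (((T i).powerset.filter (fun s => badP s.card)).card : ℝ) * 2^(n - ℓ) := by
          exact_mod_cast h1
      _ ≤ ((((T i).powerset.filter (fun s => ((s.card : ℝ) < a))).card : ℝ)
            + (((T i).powerset.filter (fun s => (b < (s.card : ℝ)))).card : ℝ)) * 2^(n-ℓ) := by
          have h2 := Finset.card_le_card hsplit
          have h3 := Finset.card_union_le ((T i).powerset.filter (fun s => ((s.card : ℝ) < a)))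
            ((T i).powerset.filter (fun s => (b < (s.card : ℝ))))
          have : (((T i).powerset.filter (fun s => badP s.card)).card : ℝ)
              ≤ (((T i).powerset.filter (fun s => ((s.card : ℝ) < a))).card : ℝ)
                + (((T i).powerset.filter (fun s => (b < (s.card : ℝ)))).card : ℝ) := by
            exact_mod_cast le_trans h2 h3
          apply mul_le_mul_of_nonneg_right this (by positivity)
      _ ≤ 2 * (2^ℓ * Real.exp (-(2 * c^2 * ℓ))) * 2^(n - ℓ) := by
          apply mul_le_mul_of_nonneg_right _ (by positivity)
          linarith
  -- assemble
  have hMcard : (M.card : ℝ) ≤ (n:ℝ) * (2 * (2^ℓ * Real.exp (-(2 * c^2 * ℓ))) * 2^(n - ℓ)) := by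
    have h1 : M.card ≤ ∑ i ∈ range (n - ℓ + 1), (Bad i).card :=
      le_trans (Finset.card_le_card hMsub) Finset.card_biUnion_le
    have h2 : ((M.card:ℝ)) ≤ ∑ i ∈ range (n - ℓ + 1), ((Bad i).card : ℝ) := by
      exact_mod_cast h1
    calc (M.card:ℝ) ≤ ∑ i ∈ range (n-ℓ+1), ((Bad i).card:ℝ) := h2
      _ ≤ ∑ _i ∈ range (n-ℓ+1), (2 * (2^ℓ * Real.exp (-(2*c^2*ℓ))) * 2^(n-ℓ)) :=
          Finset.sum_le_sum hbound
      _ = ((n-ℓ+1 : ℕ):ℝ) * (2 * (2^ℓ * Real.exp (-(2*c^2*(ℓ:ℝ)))) * 2^(n-ℓ)) := by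
          rw [Finset.sum_const, card_range, nsmul_eq_mul]
      _ ≤ (n:ℝ) * (2 * (2^ℓ * Real.exp (-(2*c^2*ℓ))) * 2^(n-ℓ)) := by
          apply mul_le_mul_of_nonneg_right _ (by positivity)
          exact_mod_cast (by omega : n - ℓ + 1 ≤ n)
  have hpow : (2:ℝ)^ℓ * 2^(n-ℓ) = 2^n := by
    rw [← pow_add]; congr 1; omega
  have hexp : Real.exp (-(2*c^2*ℓ)) ≤ ((n:ℝ)^2)⁻¹ := by
    have h3 : Real.exp (-(2*c^2*(ℓ:ℝ))) ≤ Real.exp (-(2*Real.log n)) := by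
      apply Real.exp_le_exp.2; linarith
    have h4 : Real.exp (-(2*Real.log n)) = ((n:ℝ)^2)⁻¹ := by
      rw [Real.exp_neg]
      congr 1
      rw [two_mul, Real.exp_add, Real.exp_log (by linarith : (0:ℝ) < n)]
      ring
    linarith
  have hXpos : (0:ℝ) < 2^(n-1) := by positivity
  have hN4 : (4:ℝ) ≤ (n:ℝ) := by exact_mod_cast hn
  have h2n : (2:ℝ)^n = 2^(n-1) * 2 := by rw [← pow_succ]; congr 1; omega
  have hfin : (M.card : ℝ) ≤ ((2^(n-1) : ℕ) : ℝ) := by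
    calc (M.card:ℝ) ≤ (n:ℝ) * (2 * (2^ℓ * Real.exp (-(2*c^2*ℓ))) * 2^(n-ℓ)) := hMcard
      _ ≤ (n:ℝ) * (2 * (2^ℓ * ((n:ℝ)^2)⁻¹) * 2^(n-ℓ)) := by
          apply mul_le_mul_of_nonneg_left _ (by positivity)
          apply mul_le_mul_of_nonneg_right _ (by positivity)
          apply mul_le_mul_of_nonneg_left _ (by norm_num)
          apply mul_le_mul_of_nonneg_left hexp (by positivity)
      _ = ((n:ℝ) * (2 * 2^n)) * ((n:ℝ)^2)⁻¹ := by rw [← hpow]; ring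
      _ ≤ ((2^(n-1):ℕ):ℝ) := by
          push_cast
          rw [← div_eq_mul_inv, div_le_iff₀ (by positivity : (0:ℝ) < (n:ℝ)^2)]
          nlinarith [mul_nonneg (mul_nonneg hXpos.le
            (by linarith : (0:ℝ) ≤ (n:ℝ) - 4)) (by linarith : (0:ℝ) ≤ (n:ℝ))]
  have hMnat : M.card ≤ 2^(n-1) := by exact_mod_cast hfin
  have h2n' : (2:ℕ)^n = 2^(n-1) + 2^(n-1) := by
    rw [← two_mul, ← pow_succ']; congr 1; omega
  have heta : (univ.filter (fun x => P x)).card = (univ.filter P).card := rfl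
  rw [h2n'] at hcards
  generalize hX : (2:ℕ)^(n-1) = X at hcards hMnat ⊢
  omega
end

section
/- Let 0 ≤ p₁ < 1/2 < p₂ ≤ 1 and c = min{1/2 − p₁, p₂ − 1/2}. For n ≥ 16 and ℓ ≤ n with (1/c²)·logₑ(n) ≤ ℓ, the number of binary sequences of length ℓ whose weight is not in [p₁ℓ, p₂ℓ] is at most 2^{ℓ+1}/n². Consequently, setting k = ℓ − 3 − log₂ n, there exists an injective map from this set of forbidden sequences into {0,1}^k. -/
/-- The set of forbidden windows: sequences of length `ℓ` with weight outside `[p₁ℓ, p₂ℓ]`. -/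
def Forb (ℓ : ℕ) (p₁ p₂ : ℝ) : Set (List Bool) :=
  {x | x.length = ℓ ∧ ¬(p₁ * ℓ ≤ (wt x : ℝ) ∧ (wt x : ℝ) ≤ p₂ * ℓ)}

/-!
Identify a binary sequence of length `ℓ` with the set of positions carrying `true`, so that
its weight becomes the size of that subset of `Fin ℓ`. The exponential moment method
(`∑ₛ e^{-t|s|} = (1 + e^{-t})^ℓ`, together with `cosh x ≤ e^{x²/2}`) bounds the number of
subsets of size at most `(1/2 - c)ℓ` by `2^ℓ e^{-2c²ℓ}`, complementation gives the same bound
for size at least `(1/2 + c)ℓ`, and `ℓ ≥ log n / c²` turns `e^{-2c²ℓ}` into `1/n²`.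
Since `2^k = 2^ℓ / (8n)` and `n ≥ 16`, the count is at most `2^k`.
-/

open Finset Real Function

section Tails

variable (ι : Type*) [Fintype ι]

theorem card_filter_card_le_le_exp {m t : ℝ} (ht : 0 ≤ t) :
    (#{s : Finset ι | (#s : ℝ) ≤ m} : ℝ) ≤ exp (t * m) * (exp (-t) + 1) ^ Fintype.card ι := by
  have hsum := Fintype.sum_pow_mul_eq_add_pow ι (exp (-t)) 1
  simp only [one_pow, mul_one] at hsum
  rw [← hsum, mul_sum, natCast_card_filter]
  refine sum_le_sum fun s _ => ?_
  split_ifs with hs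
  · rw [← exp_nat_mul, ← exp_add]
    exact one_le_exp (by nlinarith)
  · positivity

theorem card_filter_card_le_half_sub_le {c : ℝ} (hc : 0 ≤ c) :
    (#{s : Finset ι | (#s : ℝ) ≤ (1/2 - c) * Fintype.card ι} : ℝ)
      ≤ 2 ^ Fintype.card ι * exp (-2 * c ^ 2 * Fintype.card ι) := by
  set N := Fintype.card ι
  have hbase : exp (4 * c * (1/2 - c)) * (exp (-(4 * c)) + 1)
      = 2 * exp (-(4 * c ^ 2)) * cosh (2 * c) := by
    rw [cosh_eq, mul_add, mul_one, ← exp_add,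
      show 4 * c * (1/2 - c) + -(4 * c) = -(4 * c ^ 2) + -(2 * c) by ring,
      show 4 * c * (1/2 - c) = -(4 * c ^ 2) + 2 * c by ring, exp_add, exp_add]
    ring
  -- `t = 4c` minimises the resulting bound `(2 e^{t²/8 - tc})^N`.
  calc (#{s : Finset ι | (#s : ℝ) ≤ (1/2 - c) * N} : ℝ)
      ≤ exp (4 * c * ((1/2 - c) * N)) * (exp (-(4 * c)) + 1) ^ N :=
        card_filter_card_le_le_exp ι (by positivity)
    _ = (2 * exp (-(4 * c ^ 2)) * cosh (2 * c)) ^ N := by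
        rw [← hbase, mul_pow, ← exp_nat_mul]; ring_nf
    _ ≤ (2 * exp (-(4 * c ^ 2)) * exp ((2 * c) ^ 2 / 2)) ^ N := by
        gcongr; exact cosh_le_exp_half_sq _
    _ = 2 ^ N * exp (-2 * c ^ 2 * N) := by
        rw [mul_assoc, ← exp_add, mul_pow, ← exp_nat_mul]; ring_nf

theorem card_filter_half_add_le_card_eq (c : ℝ) :
    #{s : Finset ι | (1/2 + c) * Fintype.card ι ≤ #s}
      = #{s : Finset ι | (#s : ℝ) ≤ (1/2 - c) * Fintype.card ι} := by
  classical
  refine card_nbij' compl compl (fun s hs => ?_) (fun s hs => ?_) (fun s _ => compl_compl s)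
    (fun s _ => compl_compl s) <;>
  · simp only [coe_filter, mem_univ, true_and, Set.mem_ofPred_eq] at hs ⊢
    rw [card_compl, Nat.cast_sub (card_le_univ s)]
    linarith

theorem card_filter_card_tails_le {c : ℝ} (hc : 0 ≤ c) :
    (#{s : Finset ι | (#s : ℝ) ≤ (1/2 - c) * Fintype.card ι
        ∨ (1/2 + c) * Fintype.card ι ≤ #s} : ℝ)
      ≤ 2 ^ (Fintype.card ι + 1) * exp (-2 * c ^ 2 * Fintype.card ι) := by
  classical
  rw [filter_or]
  calc _ ≤ (#{s : Finset ι | (#s : ℝ) ≤ (1/2 - c) * Fintype.card ι} : ℝ)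
        + #{s : Finset ι | (1/2 + c) * Fintype.card ι ≤ #s} := by
        exact_mod_cast card_union_le _ _
    _ = 2 * #{s : Finset ι | (#s : ℝ) ≤ (1/2 - c) * Fintype.card ι} := by
        rw [card_filter_half_add_le_card_eq]; ring
    _ ≤ 2 * (2 ^ Fintype.card ι * exp (-2 * c ^ 2 * Fintype.card ι)) := by
        gcongr; exact card_filter_card_le_half_sub_le ι hc
    _ = _ := by ring

end Tails

section Encoding

variable {ℓ : ℕ}

theorem wt_ofFn_decide_mem (s : Finset (Fin ℓ)) :
    wt (List.ofFn fun i => decide (i ∈ s)) = #s := by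
  rw [wt, List.ofFn_eq_map, List.count, List.countP_map, List.countP_eq_length_filter,
    ← List.toFinset_card_of_nodup ((List.nodup_finRange ℓ).filter _), List.toFinset_filter,
    List.toFinset_finRange]
  simp

theorem injective_ofFn_decide_mem :
    Injective fun s : Finset (Fin ℓ) => List.ofFn fun i => decide (i ∈ s) := by
  intro s t h
  ext i
  simpa using congrFun (List.ofFn_injective h) i

theorem setOf_length_eq_and_wt (P : ℕ → Prop) :
    {x : List Bool | x.length = ℓ ∧ P (wt x)}
      = (fun s : Finset (Fin ℓ) => List.ofFn fun i => decide (i ∈ s)) '' {s | P #s} := by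
  ext x
  constructor
  · rintro ⟨rfl, hx⟩
    have hx' : (List.ofFn fun i => decide (i ∈ ({i | x[i]} : Finset (Fin x.length)))) = x := by
      simp
    exact ⟨_, by rwa [Set.mem_ofPred_eq, ← wt_ofFn_decide_mem, hx'], hx'⟩
  · rintro ⟨s, hs, rfl⟩
    exact ⟨List.length_ofFn, by rwa [wt_ofFn_decide_mem]⟩

theorem natCard_Forb_eq (p₁ p₂ : ℝ) :
    Nat.card (Forb ℓ p₁ p₂)
      = #{s : Finset (Fin ℓ) | ¬(p₁ * ℓ ≤ (#s : ℝ) ∧ (#s : ℝ) ≤ p₂ * ℓ)} := by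
  rw [Forb, setOf_length_eq_and_wt (fun w => ¬(p₁ * ℓ ≤ (w : ℝ) ∧ (w : ℝ) ≤ p₂ * ℓ)),
    Nat.card_coe_set_eq, Set.ncard_image_of_injective _ injective_ofFn_decide_mem,
    ← Set.ncard_coe_finset]
  simp

theorem natCard_Forb_le {p₁ p₂ a b : ℝ} (ha : p₁ ≤ a) (hb : b ≤ p₂) :
    Nat.card (Forb ℓ p₁ p₂) ≤ #{s : Finset (Fin ℓ) | (#s : ℝ) ≤ a * ℓ ∨ b * ℓ ≤ #s} := by
  rw [natCard_Forb_eq]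
  refine card_le_card (monotone_filter_right _ fun s _ hs => ?_)
  have := mul_le_mul_of_nonneg_right ha (Nat.cast_nonneg ℓ)
  have := mul_le_mul_of_nonneg_right hb (Nat.cast_nonneg ℓ)
  rw [not_and_or, not_le, not_le] at hs
  rcases hs with hs | hs
  · exact Or.inl (by linarith)
  · exact Or.inr (by linarith)

end Encoding

theorem exp_neg_two_mul_sq_mul_le_inv_sq {c ℓ x : ℝ} (hc : c ≠ 0) (hx : 0 < x)
    (hℓ : 1 / c ^ 2 * log x ≤ ℓ) : exp (-2 * c ^ 2 * ℓ) ≤ (x ^ 2)⁻¹ := by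
  have hlog : log x ≤ c ^ 2 * ℓ := by
    rwa [one_div, inv_mul_le_iff₀ (by positivity)] at hℓ
  rw [← exp_log hx, ← exp_nat_mul, ← exp_neg]
  exact exp_le_exp.mpr (by push_cast; linarith)

theorem two_pow_succ_div_sq_le {ℓ : ℕ} {x y : ℝ} (hx : 16 ≤ x) (hy : y = ℓ - 3 - logb 2 x) :
    2 ^ (ℓ + 1) / x ^ 2 ≤ (2 : ℝ) ^ y := by
  have hx₀ : 0 < x := by linarith
  rw [hy, sub_sub, rpow_sub two_pos, rpow_natCast, rpow_add two_pos,
    rpow_logb two_pos (by norm_num) hx₀, div_le_div_iff₀ (by positivity) (by positivity)]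
  calc 2 ^ (ℓ + 1) * ((2 : ℝ) ^ (3 : ℝ) * x) = 2 ^ ℓ * (16 * x) := by norm_num; ring
    _ ≤ 2 ^ ℓ * x ^ 2 := by gcongr; nlinarith

theorem exists_injective_fun_bool_of_natCard_le {α : Type*} [Finite α] {k : ℕ}
    (h : Nat.card α ≤ 2 ^ k) : ∃ f : α → (Fin k → Bool), Injective f := by
  have := Fintype.ofFinite α
  obtain ⟨e⟩ := Function.Embedding.nonempty_of_card_le (α := α) (β := Fin k → Bool)
    (by simpa [Nat.card_eq_fintype_card] using h)
  exact ⟨e, e.injective⟩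

theorem stmt6_general (n ℓ k : ℕ) (p₁ p₂ c : ℝ)
    (h₁ : p₁ < 1/2) (h₂ : (1:ℝ)/2 < p₂)
    (hc : c = min (1/2 - p₁) (p₂ - 1/2))
    (hn : 16 ≤ n) (hℓ : (1 / c^2) * Real.log n ≤ ℓ)
    (hk : (k : ℝ) = (ℓ : ℝ) - 3 - Real.logb 2 n) :
    (Nat.card (Forb ℓ p₁ p₂) : ℝ) ≤ 2^(ℓ+1) / n^2 ∧
      ∃ f : Forb ℓ p₁ p₂ → (Fin k → Bool), Function.Injective f := by
  have hc₀ : 0 < c := hc ▸ lt_min (by linarith) (by linarith)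
  have hp₁ : p₁ ≤ 1/2 - c := by linarith [hc ▸ min_le_left (1/2 - p₁) (p₂ - 1/2)]
  have hp₂ : 1/2 + c ≤ p₂ := by linarith [hc ▸ min_le_right (1/2 - p₁) (p₂ - 1/2)]
  have hn' : (16 : ℝ) ≤ n := by exact_mod_cast hn
  have hcard : (Nat.card (Forb ℓ p₁ p₂) : ℝ) ≤ 2 ^ (ℓ + 1) / n ^ 2 := calc
    _ ≤ (#{s : Finset (Fin ℓ) | (#s : ℝ) ≤ (1/2 - c) * ℓ ∨ (1/2 + c) * ℓ ≤ #s} : ℝ) := by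
        exact_mod_cast natCard_Forb_le hp₁ hp₂
    _ ≤ 2 ^ (ℓ + 1) * exp (-2 * c ^ 2 * ℓ) := by
        simpa using card_filter_card_tails_le (Fin ℓ) hc₀.le
    _ ≤ 2 ^ (ℓ + 1) / n ^ 2 := by
        rw [div_eq_mul_inv]
        gcongr
        exact exp_neg_two_mul_sq_mul_le_inv_sq hc₀.ne' (by linarith) hℓ
  have : Finite (Forb ℓ p₁ p₂) := (List.finite_length_eq Bool ℓ).subset fun _ hx => hx.1
  refine ⟨hcard, exists_injective_fun_bool_of_natCard_le ?_⟩
  exact_mod_cast hcard.trans (two_pow_succ_div_sq_le hn' hk)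

theorem stmt6 (n ℓ k : ℕ) (p₁ p₂ c : ℝ)
    (hp₁ : 0 ≤ p₁) (h₁ : p₁ < 1/2) (h₂ : (1:ℝ)/2 < p₂) (hp₂ : p₂ ≤ 1)
    (hc : c = min (1/2 - p₁) (p₂ - 1/2))
    (hn : 16 ≤ n) (hℓn : ℓ ≤ n) (hℓ : (1 / c^2) * Real.log n ≤ ℓ)
    (hk : (k : ℝ) = (ℓ : ℝ) - 3 - Real.logb 2 n) :
    (Nat.card (Forb ℓ p₁ p₂) : ℝ) ≤ 2^(ℓ+1) / n^2 ∧
      ∃ f : Forb ℓ p₁ p₂ → (Fin k → Bool), Function.Injective f :=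
  stmt6_general n ℓ k p₁ p₂ c h₁ h₂ hc hn hℓ hk
end

section
/- Let 0 ≤ p₁ < 1/2 < p₂ ≤ 1 and c = min{1/2 − p₁, p₂ − 1/2}. For ℓ ≥ 7 with ℓ ≥ (1/c²)·logₑ(ℓ+1), the number of binary sequences of length ℓ+1 containing at least one window of ℓ consecutive bits with weight outside [p₁ℓ, p₂ℓ] is at most 2^{ℓ−3}. -/
open Finset Real

theorem sum_pow_card_filter_eq {R : Type*} [CommSemiring R] (n : ℕ) (b : Bool) (x : R) :
    ∑ f : Fin n → Bool, x ^ #{i | f i = b} = (x + 1) ^ n := by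
  have hsum : ∑ a : Bool, (if a = b then x else 1) = x + 1 := by cases b <;> simp [add_comm]
  rw [← hsum, Fintype.sum_pow]
  exact sum_congr rfl fun f _ => by rw [← prod_const, prod_filter]

theorem List.count_ofFn {n : ℕ} (f : Fin n → Bool) (b : Bool) :
    (List.ofFn f).count b = #{i | f i = b} := by
  rw [card_filter]
  induction n with
  | zero => simp
  | succ n ih =>
    rw [List.ofFn_succ, List.count_cons, ih, Fin.sum_univ_succ, add_comm]
    simp

theorem exp_neg_mul_mul_exp_add_one_le (a : ℝ) :
    exp (-(2 * a + 4 * a ^ 2)) * (exp (4 * a) + 1) ≤ 2 * exp (-(2 * a ^ 2)) := by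
  calc exp (-(2 * a + 4 * a ^ 2)) * (exp (4 * a) + 1)
      = 2 * exp (-(4 * a ^ 2)) * cosh (2 * a) := by
        rw [cosh_eq, mul_add, mul_one, ← exp_add,
          show 2 * exp (-(4 * a ^ 2)) * ((exp (2 * a) + exp (-(2 * a))) / 2)
            = exp (-(4 * a ^ 2) + 2 * a) + exp (-(4 * a ^ 2) + -(2 * a)) by
              rw [exp_add, exp_add]; ring]
        ring_nf
    _ ≤ 2 * exp (-(4 * a ^ 2)) * exp ((2 * a) ^ 2 / 2) := by
        gcongr; exact cosh_le_exp_half_sq _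
    _ = 2 * exp (-(2 * a ^ 2)) := by rw [mul_assoc, ← exp_add]; ring_nf

/- Markov's inequality applied to `e^{4a·#{i | f i = b}}`; `4a` is the exponent that optimises
Hoeffding's bound for a fair coin. -/
theorem card_half_add_mul_le_card_filter_le (n : ℕ) (b : Bool) {a : ℝ} (ha : 0 ≤ a) :
    (#{f : Fin n → Bool | (1 / 2 + a) * n ≤ #{i | f i = b}} : ℝ) ≤
      2 ^ n * exp (-(2 * a ^ 2 * n)) := by
  calc (#{f : Fin n → Bool | (1 / 2 + a) * n ≤ #{i | f i = b}} : ℝ)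
      = ∑ f : Fin n → Bool with (1 / 2 + a) * n ≤ #{i | f i = b}, 1 := by simp
    _ ≤ ∑ f : Fin n → Bool with (1 / 2 + a) * n ≤ #{i | f i = b},
          exp (-(2 * a + 4 * a ^ 2)) ^ n * exp (4 * a) ^ #{i | f i = b} := by
        refine sum_le_sum fun f hf => ?_
        rw [← exp_nat_mul, ← exp_nat_mul, ← exp_add]
        refine one_le_exp ?_
        have := (mem_filter.1 hf).2
        nlinarith
    _ ≤ ∑ f : Fin n → Bool, exp (-(2 * a + 4 * a ^ 2)) ^ n * exp (4 * a) ^ #{i | f i = b} :=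
        sum_le_sum_of_subset_of_nonneg (subset_univ _) fun _ _ _ => by positivity
    _ = (exp (-(2 * a + 4 * a ^ 2)) * (exp (4 * a) + 1)) ^ n := by
        rw [← mul_sum, sum_pow_card_filter_eq, mul_pow]
    _ ≤ (2 * exp (-(2 * a ^ 2))) ^ n :=
        pow_le_pow_left₀ (by positivity) (exp_neg_mul_mul_exp_add_one_le a) n
    _ = 2 ^ n * exp (-(2 * a ^ 2 * n)) := by
        rw [mul_pow, ← exp_nat_mul]; ring_nf

theorem ncard_setOf_length_eq_and_count (n : ℕ) (b : Bool) (P : ℕ → Prop) [DecidablePred P] :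
    {l : List Bool | l.length = n ∧ P (l.count b)}.ncard =
      #{f : Fin n → Bool | P #{i | f i = b}} := by
  have himage : {l : List Bool | l.length = n ∧ P (l.count b)} =
      List.ofFn '' {f : Fin n → Bool | P #{i | f i = b}} := by
    ext l
    constructor
    · rintro ⟨rfl, hl⟩
      have hcount := List.count_ofFn (fun i : Fin l.length => l[(i : ℕ)]) b
      rw [List.ofFn_getElem] at hcount
      exact ⟨fun i => l[(i : ℕ)], hcount ▸ hl, List.ofFn_getElem⟩
    · rintro ⟨f, hf, rfl⟩
      exact ⟨List.length_ofFn, by rwa [List.count_ofFn]⟩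
  rw [himage, Set.ncard_image_of_injective _ List.ofFn_injective, Set.ncard_eq_toFinset_card',
    Set.toFinset_ofPred]

theorem ncard_setOf_length_eq_and_le_count_le (n : ℕ) (b : Bool) {a : ℝ} (ha : 0 ≤ a) :
    ({l : List Bool | l.length = n ∧ (1 / 2 + a) * n ≤ l.count b}.ncard : ℝ) ≤
      2 ^ n * exp (-(2 * a ^ 2 * n)) := by
  rw [ncard_setOf_length_eq_and_count n b (fun k => (1 / 2 + a) * n ≤ k)]
  exact card_half_add_mul_le_card_filter_le n b ha

theorem ncard_setOf_wt_not_mem_le (n : ℕ) {p₁ p₂ c : ℝ} (hc : 0 ≤ c) (hc₁ : c ≤ 1 / 2 - p₁)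
    (hc₂ : c ≤ p₂ - 1 / 2) :
    ({y : List Bool | y.length = n ∧ ¬(p₁ * n ≤ (wt y : ℝ) ∧ (wt y : ℝ) ≤ p₂ * n)}.ncard : ℝ) ≤
      2 * (2 ^ n * exp (-(2 * c ^ 2 * n))) := by
  set A := {l : List Bool | l.length = n ∧ (1 / 2 + c) * n ≤ l.count true}
  set B := {l : List Bool | l.length = n ∧ (1 / 2 + c) * n ≤ l.count false}
  have hsubset :
      {y : List Bool | y.length = n ∧ ¬(p₁ * n ≤ (wt y : ℝ) ∧ (wt y : ℝ) ≤ p₂ * n)} ⊆ A ∪ B := by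
    rintro y ⟨hy, hbad⟩
    have hcount : (y.count true : ℝ) + y.count false = n := by
      exact_mod_cast hy ▸ List.count_true_add_count_false y
    have hn : (0 : ℝ) ≤ n := n.cast_nonneg
    rcases not_and_or.1 hbad with hlow | hhigh
    · right; exact ⟨hy, by unfold wt at hlow; nlinarith⟩
    · left; exact ⟨hy, by unfold wt at hhigh; nlinarith⟩
  have hfinite : (A ∪ B).Finite :=
    (List.finite_length_eq Bool n).subset fun l hl => hl.elim And.left And.left
  calc _ ≤ ((A ∪ B).ncard : ℝ) := by exact_mod_cast Set.ncard_le_ncard hsubset hfinite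
    _ ≤ (A.ncard : ℝ) + B.ncard := by exact_mod_cast Set.ncard_union_le A B
    _ ≤ _ := by
        rw [two_mul]
        exact add_le_add (ncard_setOf_length_eq_and_le_count_le n true hc)
          (ncard_setOf_length_eq_and_le_count_le n false hc)

theorem ncard_setOf_length_succ_drop_one {α : Type*} (n : ℕ) (P : List α → Prop) :
    {x : List α | x.length = n + 1 ∧ P (x.drop 1)}.ncard =
      Nat.card α * {y : List α | y.length = n ∧ P y}.ncard := by
  have himage : {x : List α | x.length = n + 1 ∧ P (x.drop 1)} =
      (fun p : α × List α => p.1 :: p.2) '' (Set.univ ×ˢ {y | y.length = n ∧ P y}) := by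
    ext (_ | ⟨a, y⟩) <;> simp
  have hinj : Function.Injective (fun p : α × List α => p.1 :: p.2) := fun p q h =>
    Prod.ext (List.cons.inj h).1 (List.cons.inj h).2
  rw [himage, Set.ncard_image_of_injective _ hinj, Set.ncard_prod, Set.ncard_univ]

theorem ncard_setOf_length_succ_take {α : Type*} (n : ℕ) (P : List α → Prop) :
    {x : List α | x.length = n + 1 ∧ P (x.take n)}.ncard =
      {y : List α | y.length = n ∧ P y}.ncard * Nat.card α := by
  have himage : {x : List α | x.length = n + 1 ∧ P (x.take n)} =
      (fun p : List α × α => p.1 ++ [p.2]) '' ({y | y.length = n ∧ P y} ×ˢ Set.univ) := by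
    ext x
    constructor
    · rintro ⟨hx, hP⟩
      have hne : x ≠ [] := List.ne_nil_of_length_eq_add_one hx
      refine ⟨(x.dropLast, x.getLast hne), ⟨⟨by simp [hx], ?_⟩, trivial⟩,
        List.dropLast_append_getLast hne⟩
      rwa [List.dropLast_eq_take, hx, Nat.add_sub_cancel]
    · rintro ⟨⟨y, a⟩, ⟨⟨rfl, hP⟩, -⟩, rfl⟩
      simpa using hP
  have hinj : Function.Injective (fun p : List α × α => p.1 ++ [p.2]) := fun p q h => by
    obtain ⟨h₁, h₂⟩ := List.append_inj' h rfl
    exact Prod.ext h₁ (List.singleton_inj.1 h₂)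
  rw [himage, Set.ncard_image_of_injective _ hinj, Set.ncard_prod, Set.ncard_univ]

theorem ncard_setOf_length_succ_take_or_drop_one_le {α : Type*} (n : ℕ) (Q : List α → Prop) :
    {x : List α | x.length = n + 1 ∧ (Q (x.take n) ∨ Q (x.drop 1))}.ncard ≤
      2 * Nat.card α * {y : List α | y.length = n ∧ Q y}.ncard := by
  simp only [and_or_left, Set.ofPred_or]
  refine (Set.ncard_union_le _ _).trans ?_
  rw [ncard_setOf_length_succ_take, ncard_setOf_length_succ_drop_one]
  linarith

theorem stmt7_general (ℓ : ℕ) (p₁ p₂ c : ℝ)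
    (h₁ : p₁ < 1/2) (h₂ : (1:ℝ)/2 < p₂)
    (hc : c = min (1/2 - p₁) (p₂ - 1/2))
    (hℓ7 : 7 ≤ ℓ) (hℓ : (1 / c^2) * Real.log (ℓ + 1) ≤ ℓ) :
    Nat.card {x : List Bool // x.length = ℓ + 1 ∧
        (¬(p₁ * ℓ ≤ (wt (x.take ℓ) : ℝ) ∧ (wt (x.take ℓ) : ℝ) ≤ p₂ * ℓ) ∨
         ¬(p₁ * ℓ ≤ (wt (x.drop 1) : ℝ) ∧ (wt (x.drop 1) : ℝ) ≤ p₂ * ℓ))}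
      ≤ 2^(ℓ-3) := by
  have hc0 : 0 < c := hc ▸ lt_min (by linarith) (by linarith)
  have hbad := ncard_setOf_wt_not_mem_le ℓ hc0.le (hc ▸ min_le_left _ _) (hc ▸ min_le_right _ _)
  have hexp : exp (-(2 * c ^ 2 * ℓ)) ≤ (64 : ℝ)⁻¹ := by
    have hlog : 2 * log (ℓ + 1) ≤ 2 * c ^ 2 * ℓ := by
      rw [one_div_mul_eq_div, div_le_iff₀' (by positivity)] at hℓ
      linarith
    have h64 : (64 : ℝ) ≤ (ℓ + 1) ^ 2 := by
      have : (7 : ℝ) ≤ ℓ := by exact_mod_cast hℓ7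
      nlinarith
    calc exp (-(2 * c ^ 2 * ℓ)) ≤ exp (-(2 * log (ℓ + 1))) := exp_le_exp.2 (neg_le_neg hlog)
      _ = ((ℓ + 1) ^ 2 : ℝ)⁻¹ := by
        rw [← Nat.cast_ofNat, ← log_pow, exp_neg, exp_log (by positivity)]
      _ ≤ (64 : ℝ)⁻¹ := inv_anti₀ (by norm_num) h64
  rw [← Set.coe_ofPred, Nat.card_coe_set_eq]
  refine (ncard_setOf_length_succ_take_or_drop_one_le ℓ
    fun y => ¬(p₁ * ℓ ≤ (wt y : ℝ) ∧ (wt y : ℝ) ≤ p₂ * ℓ)).trans ?_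
  rw [Nat.card_eq_fintype_card, Fintype.card_bool, ← Nat.cast_le (α := ℝ)]
  calc _ ≤ (4 : ℝ) * (2 * (2 ^ ℓ * (64 : ℝ)⁻¹)) := by
        push_cast; gcongr; exact hbad.trans (by gcongr)
    _ = ((2 ^ (ℓ - 3) : ℕ) : ℝ) := by
        push_cast; rw [← pow_sub_mul_pow 2 (by omega : 3 ≤ ℓ)]; ring

theorem stmt7 (ℓ : ℕ) (p₁ p₂ c : ℝ)
    (hp₁ : 0 ≤ p₁) (h₁ : p₁ < 1/2) (h₂ : (1:ℝ)/2 < p₂) (hp₂ : p₂ ≤ 1)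
    (hc : c = min (1/2 - p₁) (p₂ - 1/2))
    (hℓ7 : 7 ≤ ℓ) (hℓ : (1 / c^2) * Real.log (ℓ + 1) ≤ ℓ) :
    Nat.card {x : List Bool // x.length = ℓ + 1 ∧
        (¬(p₁ * ℓ ≤ (wt (x.take ℓ) : ℝ) ∧ (wt (x.take ℓ) : ℝ) ≤ p₂ * ℓ) ∨
         ¬(p₁ * ℓ ≤ (wt (x.drop 1) : ℝ) ∧ (wt (x.drop 1) : ℝ) ≤ p₂ * ℓ))}
      ≤ 2^(ℓ-3) :=
  stmt7_general ℓ p₁ p₂ c h₁ h₂ hc hℓ7 hℓ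
end

section
/- For a ∈ Z_{2n}, the Varshamov–Tenengolts code L_a(n) = {x ∈ {0,1}^n : ∑_{i=1}^n i·xᵢ ≡ a (mod 2n)} has minimum Hamming distance at least 3; equivalently, it can correct any single substitution error: if x, y ∈ L_a(n) differ in at most two positions, then x = y. -/
/-- The VT syndrome of a binary sequence indexed by `Fin n`. -/
def vtSyn {n : ℕ} (x : Fin n → Bool) : ℕ :=
  ∑ i : Fin n, (i.val + 1) * (if x i then 1 else 0)

theorem stmt18 (n a : ℕ) (x y : Fin n → Bool)
    (hx : vtSyn x % (2 * n) = a % (2 * n))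
    (hy : vtSyn y % (2 * n) = a % (2 * n))
    (hdist : hammingDist x y ≤ 2) : x = y := by
  by_contra hne
  set g : Fin n → ℤ := fun i =>
    ((i : ℕ) + 1) * ((if x i then 1 else 0) - (if y i then 1 else 0)) with hg
  have hmod : vtSyn x ≡ vtSyn y [MOD 2 * n] := hx.trans hy.symm
  have hdvd0 : ((2 * n : ℕ) : ℤ) ∣ (vtSyn y : ℤ) - (vtSyn x : ℤ) := hmod.dvd
  have hsum : (vtSyn x : ℤ) - vtSyn y = ∑ i : Fin n, g i := by
    simp only [vtSyn, hg]
    push_cast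
    rw [← Finset.sum_sub_distrib]
    exact Finset.sum_congr rfl fun i _ => by ring
  set s := Finset.univ.filter (fun i : Fin n => x i ≠ y i) with hs
  have hcard : s.card ≤ 2 := hdist
  have hsum2 : ∑ i ∈ s, g i = ∑ i : Fin n, g i := by
    apply Finset.sum_filter_of_ne
    intro i _ hgi
    intro hxy
    apply hgi
    simp [hg, hxy]
  have hdvd : ((2 * n : ℕ) : ℤ) ∣ ∑ i ∈ s, g i := by
    rw [hsum2, ← hsum, show (vtSyn x : ℤ) - vtSyn y = -((vtSyn y : ℤ) - vtSyn x) by ring]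
    exact hdvd0.neg_right
  have hmem : ∀ i, i ∈ s ↔ x i ≠ y i := by
    intro i; simp [hs]
  have hgval : ∀ i : Fin n, x i ≠ y i → g i = (i : ℤ) + 1 ∨ g i = -((i : ℤ) + 1) := by
    intro i hxy
    cases hxb : x i <;> cases hyb : y i <;>
      simp [hg, hxb, hyb] at hxy ⊢
  have hsne : s.Nonempty := by
    rcases Finset.eq_empty_or_nonempty s with h | h
    · exfalso; apply hne; funext i
      by_contra hxy
      exact Finset.notMem_empty i (h ▸ (hmem i).mpr hxy)
    · exact h
  have hc1 : 1 ≤ s.card := Finset.card_pos.mpr hsne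
  interval_cases hc : s.card
  · obtain ⟨i, hi⟩ := Finset.card_eq_one.mp hc
    have hxi : x i ≠ y i := (hmem i).mp (hi ▸ Finset.mem_singleton_self i)
    rw [hi, Finset.sum_singleton] at hdvd
    have hin : (i : ℕ) < n := i.isLt
    rcases hgval i hxi with h1 | h1 <;>
    · have h0 := Int.eq_zero_of_abs_lt_dvd hdvd (by rw [h1, abs_lt]; push_cast; constructor <;> omega)
      rw [h1] at h0; omega
  · obtain ⟨i, j, hij, hij2⟩ := Finset.card_eq_two.mp hc
    have hxi : x i ≠ y i := (hmem i).mp (by rw [hij2]; simp)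
    have hxj : x j ≠ y j := (hmem j).mp (by rw [hij2]; simp)
    rw [hij2, Finset.sum_pair hij] at hdvd
    have hin : (i : ℕ) < n := i.isLt
    have hjn : (j : ℕ) < n := j.isLt
    have hijv : (i : ℕ) ≠ (j : ℕ) := fun h => hij (Fin.ext h)
    rcases hgval i hxi with h1 | h1 <;> rcases hgval j hxj with h2 | h2 <;>
    · have h0 := Int.eq_zero_of_abs_lt_dvd hdvd
        (by rw [h1, h2, abs_lt]; push_cast; constructor <;> omega)
      rw [h1, h2] at h0; omega
end
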